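/- Let g be a real entire function, let α ∈ ℝ, β > 0, m ∈ ℕ with m ≥ 1, and define f(x) := ((x − α)² + β²)^m · g(x), so that α ± iβ are non-real zeros of f of order m. If g(α) ≠ 0, then L₁(α; f) = −2m·β^{4m−2}·g(α)² + β^{4m}·L₁(α; g). Consequently, for fixed g, α and m with g(α) ≠ 0, there exists M > 0 such that L₁(α; f) < 0 for all 0 < β < M. -/

import Mathlib

/-!
Since `L₁(f) = -f² (log f)''`, the Laguerre expression satisfies
`L₁(fg) = g² L₁(f) + f² L₁(g)` and `L₁(hᵐ) = m h^{2m-2} L₁(h)`. For `q(z) = (z - α)² + β²` one has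
`q(α) = β²` and `L₁(q)(α) = -2β²`, which gives the formula. Since `g` is real on `ℝ`, both `g(α)` and
`L₁(α; g)` are real, and for small `β` the term `-2m β^{4m-2} g(α)²` dominates `β^{4m} L₁(α; g)`.
-/

open ComplexOrder

/-- The first Laguerre expression `L₁(x; f) = f′(x)² − f(x)f″(x)`. -/
noncomputable def L1 (f : ℂ → ℂ) (x : ℂ) : ℂ :=
  (deriv f x) ^ 2 - f x * iteratedDeriv 2 f x

open Filter Topology

lemma iteratedDeriv_two_apply {𝕜 F : Type*} [NontriviallyNormedField 𝕜] [NormedAddCommGroup F]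
    [NormedSpace 𝕜 F] (f : 𝕜 → F) (x : 𝕜) : iteratedDeriv 2 f x = deriv (deriv f) x := by
  rw [iteratedDeriv_succ, iteratedDeriv_one]

lemma L1_mul {f g : ℂ → ℂ} (hf : Differentiable ℂ f) (hg : Differentiable ℂ g) (x : ℂ) :
    L1 (fun y => f y * g y) x = g x ^ 2 * L1 f x + f x ^ 2 * L1 g x := by
  have hderiv : deriv (fun y => f y * g y) = fun y => deriv f y * g y + f y * deriv g y :=
    funext fun y => deriv_fun_mul (hf y) (hg y)
  have hf' := hf.deriv x
  have hg' := hg.deriv x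
  simp only [L1, iteratedDeriv_two_apply, hderiv]
  rw [deriv_fun_add (hf'.fun_mul (hg x)) ((hf x).fun_mul hg'), deriv_fun_mul hf' (hg x),
    deriv_fun_mul (hf x) hg']
  ring

lemma L1_pow {h : ℂ → ℂ} (hh : Differentiable ℂ h) (n : ℕ) (x : ℂ) :
    L1 (fun y => h y ^ n) x = n * h x ^ (2 * n - 2) * L1 h x := by
  induction n with
  | zero => simp [L1, iteratedDeriv_two_apply]
  | succ n ih =>
    have hpow : L1 (fun y => h y ^ (n + 1)) x = L1 (fun y => h y ^ n * h y) x := by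
      simp only [pow_succ]
    rw [hpow, L1_mul (hh.fun_pow n) hh, ih]
    rcases n with _ | n
    · simp
    · rw [show 2 * (n + 1) - 2 = 2 * n by omega, show 2 * (n + 1 + 1) - 2 = 2 * n + 2 by omega]
      push_cast
      ring

lemma L1_sub_sq_add_const (a c : ℂ) : L1 (fun z => (z - a) ^ 2 + c) a = -2 * c := by
  have hderiv : deriv (fun z => (z - a) ^ 2 + c) = fun z => 2 * (z - a) := by
    funext z
    simp
  have hderiv2 : deriv (fun z => 2 * (z - a)) a = 2 := by simp
  simp only [L1, iteratedDeriv_two_apply, hderiv, hderiv2]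
  ring

theorem L1_sub_sq_add_sq_pow_mul {g : ℂ → ℂ} (hg : Differentiable ℂ g) (a b : ℂ) (m : ℕ) :
    L1 (fun z => ((z - a) ^ 2 + b ^ 2) ^ m * g z) a =
      -2 * m * b ^ (4 * m - 2) * g a ^ 2 + b ^ (4 * m) * L1 g a := by
  have hq : Differentiable ℂ fun z => (z - a) ^ 2 + b ^ 2 := by fun_prop
  rw [L1_mul (hq.fun_pow m) hg, L1_pow hq, L1_sub_sq_add_const]
  rcases m with _ | m
  · simp
  · simp only [sub_self, ne_eq, OfNat.ofNat_ne_zero, not_false_eq_true, zero_pow, zero_add]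
    rw [show 4 * (m + 1) - 2 = 2 * (2 * (m + 1) - 2) + 2 by omega,
      show 4 * (m + 1) = 2 * (2 * (m + 1)) by ring]
    ring

lemma im_deriv_eq_zero_of_forall_im_eq_zero {g : ℂ → ℂ} (x : ℝ) (hg : DifferentiableAt ℂ g x)
    (hreal : ∀ t : ℝ, (g t).im = 0) : (deriv g x).im = 0 := by
  have h := Complex.imCLM.hasFDerivAt.comp_hasDerivAt x hg.hasDerivAt.comp_ofReal
  simp only [Function.comp_def, Complex.imCLM_apply, hreal] at h
  exact h.unique (hasDerivAt_const x 0)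

lemma im_L1_eq_zero_of_forall_im_eq_zero {g : ℂ → ℂ} (hg : Differentiable ℂ g)
    (hreal : ∀ t : ℝ, (g t).im = 0) (x : ℝ) : (L1 g x).im = 0 := by
  have hderiv t := im_deriv_eq_zero_of_forall_im_eq_zero t (hg t) hreal
  have hderiv2 := im_deriv_eq_zero_of_forall_im_eq_zero x (hg.deriv x) hderiv
  simp [L1, iteratedDeriv_two_apply, pow_two, hreal, hderiv, hderiv2]

lemma exists_pos_forall_pow_add_two_mul_lt_pow_mul (k : ℕ) (L : ℝ) {c : ℝ} (hc : 0 < c) :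
    ∃ M, 0 < M ∧ ∀ β : ℝ, 0 < β → β < M → β ^ (k + 2) * L < β ^ k * c := by
  have hlim : Tendsto (fun β : ℝ => β ^ 2 * L) (𝓝 0) (𝓝 0) :=
    (by fun_prop : Continuous fun β : ℝ => β ^ 2 * L).tendsto' 0 0 (by simp)
  obtain ⟨M, hM, hball⟩ := Metric.eventually_nhds_iff.1 (hlim.eventually (gt_mem_nhds hc))
  refine ⟨M, hM, fun β hβ hβM => ?_⟩
  have hsmall : β ^ 2 * L < c := hball (by simpa [Real.dist_eq, abs_of_pos hβ] using hβM)
  calc β ^ (k + 2) * L = β ^ k * (β ^ 2 * L) := by ring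
    _ < β ^ k * c := by gcongr

/-- **Proposition 2.3.** Let `g` be a real entire function, `α ∈ ℝ`, `β > 0`, `m ≥ 1`, and
`f(x) := ((x − α)² + β²)^m · g(x)`.  If `g(α) ≠ 0`, then
`L₁(α; f) = −2m·β^{4m−2}·g(α)² + β^{4m}·L₁(α; g)`; consequently there is an `M > 0` such
that `L₁(α; f) < 0` for all `0 < β < M`. -/
theorem prop_2_3 (g : ℂ → ℂ) (α : ℝ) (m : ℕ)
    (hent : Differentiable ℂ g) (hreal : ∀ x : ℝ, (g x).im = 0)
    (hm : 1 ≤ m) (hgα : g (α : ℂ) ≠ 0) :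
    (∀ β : ℝ, 0 < β →
      L1 (fun z => ((z - (α : ℂ)) ^ 2 + (β : ℂ) ^ 2) ^ m * g z) (α : ℂ) =
        -2 * (m : ℂ) * (β : ℂ) ^ (4 * m - 2) * (g (α : ℂ)) ^ 2 +
          (β : ℂ) ^ (4 * m) * L1 g (α : ℂ)) ∧
    ∃ M : ℝ, 0 < M ∧ ∀ β : ℝ, 0 < β → β < M →
      L1 (fun z => ((z - (α : ℂ)) ^ 2 + (β : ℂ) ^ 2) ^ m * g z) (α : ℂ) < 0 := by
  refine ⟨fun β _ => L1_sub_sq_add_sq_pow_mul hent α β m, ?_⟩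
  lift L1 g α to ℝ using im_L1_eq_zero_of_forall_im_eq_zero hent hreal α with L hL
  lift g α to ℝ using hreal α with a ha
  have hc : 0 < 2 * m * a ^ 2 := by
    have : a ≠ 0 := by exact_mod_cast hgα
    positivity
  obtain ⟨M, hM, hsmall⟩ := exists_pos_forall_pow_add_two_mul_lt_pow_mul (4 * m - 2) L hc
  refine ⟨M, hM, fun β hβ hβM => ?_⟩
  have hneg : ((β ^ (4 * m - 2 + 2) * L - β ^ (4 * m - 2) * (2 * m * a ^ 2) : ℝ) : ℂ) < 0 := by
    exact_mod_cast sub_neg.2 (hsmall β hβ hβM)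
  rw [L1_sub_sq_add_sq_pow_mul hent, ← ha, ← hL]
  convert hneg using 1
  rw [show 4 * m - 2 + 2 = 4 * m by omega]
  push_cast
  ring
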